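/- For a statistical manifold (M, g, ∇), the following are equivalent: (1) R = R* (conjugate symmetry of the curvature); (2) ∇C is totally symmetric; (3) ∇̂C is totally symmetric; (4) ∇̂K is totally symmetric; (5) R(X,Y,Z,W) = −R(X,Y,W,Z) for the (0,4)-curvature tensor. -/

import Mathlib

open scoped BigOperators

namespace StatMfd

/-- Vector fields on an "abstract manifold": derivations of the algebra `A`
of smooth functions. -/
abbrev VF (A : Type*) [CommRing A] [Algebra ℝ A] := Derivation ℝ A A

variable {A : Type*} [CommRing A] [Algebra ℝ A]

/-- An affine connection on vector fields. -/
structure Conn (A : Type*) [CommRing A] [Algebra ℝ A] where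
  D : VF A → VF A → VF A
  add_left : ∀ X Y Z, D (X + Y) Z = D X Z + D Y Z
  smul_left : ∀ (f : A) (X Y), D (f • X) Y = f • D X Y
  add_right : ∀ X Y Z, D X (Y + Z) = D X Y + D X Z
  leibniz : ∀ (f : A) (X Y), D X (f • Y) = f • D X Y + (X f) • Y

/-- A pseudo-Riemannian metric: a symmetric nondegenerate `A`-bilinear form. -/
structure Metric (A : Type*) [CommRing A] [Algebra ℝ A] where
  g : VF A → VF A → A
  add_left : ∀ X Y Z, g (X + Y) Z = g X Z + g Y Z
  smul_left : ∀ (f : A) (X Y), g (f • X) Y = f * g X Y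
  symm : ∀ X Y, g X Y = g Y X
  nondeg : ∀ X, (∀ Y, g X Y = 0) → X = 0

/-- The connection `∇` is torsion free. -/
def TorsionFree (C : Conn A) : Prop := ∀ X Y, C.D X Y - C.D Y X = ⁅X, Y⁆

/-- The cubic form `C(X,Y,Z) = (∇_X g)(Y,Z)`. -/
def cubic (gm : Metric A) (C : Conn A) (X Y Z : VF A) : A :=
  X (gm.g Y Z) - gm.g (C.D X Y) Z - gm.g Y (C.D X Z)

/-- Total symmetry of a `(0,3)`-tensor (valued in `A` or in vector fields). -/
def TotSym3 {B : Type*} (T : VF A → VF A → VF A → B) : Prop :=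
  (∀ X Y Z, T X Y Z = T Y X Z) ∧ (∀ X Y Z, T X Y Z = T X Z Y)

/-- Total symmetry of a `(0,4)`-tensor. -/
def TotSym4 (T : VF A → VF A → VF A → VF A → A) : Prop :=
  (∀ X Y Z W, T X Y Z W = T Y X Z W) ∧ (∀ X Y Z W, T X Y Z W = T X Z Y W) ∧
    (∀ X Y Z W, T X Y Z W = T X Y W Z)

/-- `(g, ∇)` is a statistical structure. -/
def IsStatistical (gm : Metric A) (C : Conn A) : Prop :=
  TorsionFree C ∧ TotSym3 (cubic gm C)

/-- `∇*` is the dual connection of `∇` with respect to `g`. -/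
def IsDual (gm : Metric A) (C Cs : Conn A) : Prop :=
  ∀ X Y Z, X (gm.g Y Z) = gm.g (C.D X Y) Z + gm.g Y (Cs.D X Z)

/-- `h` is the Levi-Civita connection of `g`. -/
def IsLeviCivita (gm : Metric A) (h : Conn A) : Prop :=
  TorsionFree h ∧ ∀ X Y Z, X (gm.g Y Z) = gm.g (h.D X Y) Z + gm.g Y (h.D X Z)

/-- The difference tensor `K(X,Y) = ∇_X Y − ∇̂_X Y`. -/
def Kdiff (C h : Conn A) (X Y : VF A) : VF A := C.D X Y - h.D X Y

/-- The curvature tensor of a connection. -/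
def curv (C : Conn A) (X Y Z : VF A) : VF A :=
  C.D X (C.D Y Z) - C.D Y (C.D X Z) - C.D ⁅X, Y⁆ Z

/-- `(∇_X K)(Y,Z)` for a `(1,2)`-tensor `K`. -/
def covK (C : Conn A) (K : VF A → VF A → VF A) (X Y Z : VF A) : VF A :=
  C.D X (K Y Z) - K (C.D X Y) Z - K Y (C.D X Z)

/-- `(∇_X T)(Y,Z,W)` for a `(0,3)`-tensor `T`. -/
def covC (C : Conn A) (T : VF A → VF A → VF A → A) (X Y Z W : VF A) : A :=
  X (T Y Z W) - T (C.D X Y) Z W - T Y (C.D X Z) W - T Y Z (C.D X W)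

/-- `(∇_X T)(Y,Z)` for a `(0,2)`-tensor `T`. -/
def cov2 (C : Conn A) (T : VF A → VF A → A) (X Y Z : VF A) : A :=
  X (T Y Z) - T (C.D X Y) Z - T Y (C.D X Z)

/-- `(∇_X R)(Y,Z)W` for the curvature tensor of a connection. -/
def covR (C : Conn A) (X Y Z W : VF A) : VF A :=
  C.D X (curv C Y Z W) - curv C (C.D X Y) Z W - curv C Y (C.D X Z) W
    - curv C Y Z (C.D X W)

/-- A global frame of vector fields together with its dual coframe. -/
structure Frame (A : Type*) [CommRing A] [Algebra ℝ A] (n : ℕ) where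
  e : Fin n → VF A
  ε : Fin n → VF A → A
  ε_add : ∀ i X Y, ε i (X + Y) = ε i X + ε i Y
  ε_smul : ∀ i (f : A) X, ε i (f • X) = f * ε i X
  expand : ∀ X, X = ∑ i, ε i X • e i

/-- The Ricci curvature `Ric(Y,Z) = tr{X ↦ R(X,Y)Z}` computed in a frame. -/
def ricci {n : ℕ} (F : Frame A n) (C : Conn A) (Y Z : VF A) : A :=
  ∑ i, F.ε i (curv C (F.e i) Y Z)

/-- `τ_g(X) = tr K_X` computed in a frame. -/
def tau {n : ℕ} (F : Frame A n) (K : VF A → VF A → VF A) (X : VF A) : A :=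
  ∑ i, F.ε i (K X (F.e i))

/-- `(div^∇̂ K)(Y,Z)`, the trace of `V ↦ (∇̂_V K)(Y,Z)`, computed in a frame. -/
def divK {n : ℕ} (F : Frame A n) (h : Conn A) (K : VF A → VF A → VF A)
    (Y Z : VF A) : A :=
  ∑ i, F.ε i (covK h K (F.e i) Y Z)

/-- `(M,g,∇)` has constant curvature `k`. -/
def ConstCurv (gm : Metric A) (C : Conn A) (k : ℝ) : Prop :=
  ∀ X Y Z, curv C X Y Z = k • (gm.g Y Z • X - gm.g X Z • Y)

/-- Projective flatness of a connection, via Eisenhart's characterization: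
for `n = 2` total symmetry of `∇ Ric`, for `n ≥ 3` vanishing of the
projective curvature tensor. -/
def ProjFlat {n : ℕ} (F : Frame A n) (C : Conn A) : Prop :=
  (n = 2 ∧ TotSym3 (cov2 C (ricci F C))) ∨
    (3 ≤ n ∧ ∀ X Y Z, curv C X Y Z =
      ((n : ℝ) - 1)⁻¹ • (ricci F C Y Z • X - ricci F C X Z • Y))

/-!
Write `∇ = ∇̂ + K`. For a statistical structure the tensor `g(K_X Y, Z)` is totally
symmetric, equal to `-C/2`, and the dual connection is `∇* = ∇̂ - K`. Expanding both
curvatures around `∇̂` gives `R - R* = 2((∇̂_X K)(Y,·) - (∇̂_Y K)(X,·))`, so `R = R*` says exactly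
that `∇̂K` is symmetric in its first two slots; since `K` is symmetric this is total symmetry
of `∇̂K`, and `∇̂C = -2 g(∇̂K, ·)`. Replacing `∇̂` by `∇` in `∇C` adds the term
`2(g(K_X Y, K_Z W) + g(K_X Z, K_Y W) + g(K_X W, K_Y Z))`, which is symmetric in `X, Y`.
Finally `g(R(X,Y)Z, W) = -g(Z, R*(X,Y)W)` for any pair of dual connections, which turns
`R = R*` into the skew-symmetry of `R(X,Y,·,·)`.
-/

lemma eq_of_add_self_eq_add_self {M : Type*} [AddCommGroup M] [Module ℝ M] {a b : M}
    (hab : a + a = b + b) : a = b := by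
  rw [← two_smul ℝ, ← two_smul ℝ] at hab
  exact smul_right_injective M two_ne_zero hab

section Metric

variable (gm : Metric A)

lemma g_sub_left (X Y Z : VF A) : gm.g (X - Y) Z = gm.g X Z - gm.g Y Z :=
  (AddMonoidHom.mk' (gm.g · Z) (gm.add_left · · Z)).map_sub X Y

lemma g_add_right (X Y Z : VF A) : gm.g X (Y + Z) = gm.g X Y + gm.g X Z := by
  rw [gm.symm, gm.add_left, gm.symm Y, gm.symm Z]

lemma g_sub_right (X Y Z : VF A) : gm.g X (Y - Z) = gm.g X Y - gm.g X Z := by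
  rw [gm.symm, g_sub_left, gm.symm Y, gm.symm Z]

lemma ext_g {U V : VF A} (hUV : ∀ W, gm.g U W = gm.g V W) : U = V :=
  sub_eq_zero.mp (gm.nondeg _ fun W => by rw [g_sub_left, hUV, sub_self])

end Metric

section Conn

variable (D : Conn A)

lemma D_sub_left (X Y Z : VF A) : D.D (X - Y) Z = D.D X Z - D.D Y Z :=
  (AddMonoidHom.mk' (D.D · Z) (D.add_left · · Z)).map_sub X Y

lemma D_neg_right (X Y : VF A) : D.D X (-Y) = -D.D X Y :=
  (AddMonoidHom.mk' (D.D X) (D.add_right X)).map_neg Y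

end Conn

section Kdiff

variable {D h : Conn A}

lemma D_eq_add_Kdiff (X Y : VF A) : D.D X Y = h.D X Y + Kdiff D h X Y := by
  rw [Kdiff, add_sub_cancel]

lemma Kdiff_sub_left (X Y Z : VF A) :
    Kdiff D h (X - Y) Z = Kdiff D h X Z - Kdiff D h Y Z := by
  simp only [Kdiff, D_sub_left]; abel

lemma Kdiff_add_right (X Y Z : VF A) :
    Kdiff D h X (Y + Z) = Kdiff D h X Y + Kdiff D h X Z := by
  simp only [Kdiff, D.add_right, h.add_right]; abel

lemma Kdiff_neg_right (X Y : VF A) : Kdiff D h X (-Y) = -Kdiff D h X Y := by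
  simp only [Kdiff, D_neg_right]; abel

lemma Kdiff_comm (hD : TorsionFree D) (hh : TorsionFree h) (X Y : VF A) :
    Kdiff D h X Y = Kdiff D h Y X := by
  rw [Kdiff, Kdiff, sub_eq_sub_iff_sub_eq_sub, hD, hh]

lemma curv_eq_curv_add_covK (hh : TorsionFree h) (X Y Z : VF A) :
    curv D X Y Z = curv h X Y Z
      + (covK h (Kdiff D h) X Y Z - covK h (Kdiff D h) Y X Z)
      + (Kdiff D h X (Kdiff D h Y Z) - Kdiff D h Y (Kdiff D h X Z)) := by
  have hbracket : (⁅X, Y⁆ : VF A) = h.D X Y - h.D Y X := (hh X Y).symm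
  simp only [curv, covK, D_eq_add_Kdiff (D := D) (h := h), h.add_right, Kdiff_add_right,
    hbracket, D_sub_left, Kdiff_sub_left]
  abel

end Kdiff

lemma g_curv_eq_neg_g_curv_dual {gm : Metric A} {C Cs : Conn A} (hdual : IsDual gm C Cs)
    (X Y Z W : VF A) : gm.g (curv C X Y Z) W = -gm.g Z (curv Cs X Y W) := by
  have hC : ∀ P U V, gm.g (C.D P U) V = P (gm.g U V) - gm.g U (Cs.D P V) :=
    fun P U V => by linear_combination -hdual P U V
  simp only [curv, g_sub_left, g_sub_right, hC, map_sub, Derivation.commutator_apply]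
  ring

lemma curv_eq_curv_dual_iff_skew {gm : Metric A} {C Cs : Conn A} (hdual : IsDual gm C Cs) :
    (∀ X Y Z, curv C X Y Z = curv Cs X Y Z) ↔
      ∀ X Y Z W, gm.g (curv C X Y Z) W = -gm.g (curv C X Y W) Z := by
  constructor
  · intro hR X Y Z W
    rw [g_curv_eq_neg_g_curv_dual hdual, ← hR, gm.symm Z]
  · intro hskew X Y Z
    refine ext_g gm fun W => ?_
    linear_combination hskew X Y W Z - g_curv_eq_neg_g_curv_dual hdual X Y W Z
      - gm.symm (curv Cs X Y Z) W

section Symmetry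

variable {D : Conn A}

lemma totSym3_covK_iff {K : VF A → VF A → VF A} (hK : ∀ X Y, K X Y = K Y X) :
    TotSym3 (covK D K) ↔ ∀ X Y Z, covK D K X Y Z = covK D K Y X Z := by
  refine ⟨And.left, fun hcomm => ⟨hcomm, fun X Y Z => ?_⟩⟩
  simp only [covK, hK Y Z, hK (D.D X Y) Z, hK Y (D.D X Z)]
  abel

lemma totSym4_covC_iff {T : VF A → VF A → VF A → A} (hT : TotSym3 T) :
    TotSym4 (covC D T) ↔ ∀ X Y Z W, covC D T X Y Z W = covC D T Y X Z W := by
  obtain ⟨h12, h23⟩ := hT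
  refine ⟨And.left, fun hcomm => ⟨hcomm, fun X Y Z W => ?_, fun X Y Z W => ?_⟩⟩
  · simp only [covC]
    linear_combination congrArg X (h12 Y Z W) - h12 (D.D X Y) Z W + h12 (D.D X Z) Y W
      + h12 Z Y (D.D X W)
  · simp only [covC]
    linear_combination congrArg X (h23 Y Z W) - h23 (D.D X Y) Z W - h23 Y (D.D X Z) W
      - h23 Y Z (D.D X W)

end Symmetry

section Cubic

variable (gm : Metric A) (C : Conn A)

lemma cubic_add_left (X X' Y Z : VF A) :
    cubic gm C (X + X') Y Z = cubic gm C X Y Z + cubic gm C X' Y Z := by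
  simp only [cubic, Derivation.add_apply, C.add_left, gm.add_left, g_add_right]
  ring

lemma cubic_add_middle (X Y Y' Z : VF A) :
    cubic gm C X (Y + Y') Z = cubic gm C X Y Z + cubic gm C X Y' Z := by
  simp only [cubic, map_add, C.add_right, gm.add_left]
  ring

lemma cubic_add_right (X Y Z Z' : VF A) :
    cubic gm C X Y (Z + Z') = cubic gm C X Y Z + cubic gm C X Y Z' := by
  simp only [cubic, map_add, C.add_right, g_add_right]
  ring

end Cubic

section Statistical

variable {gm : Metric A} {C Cs h : Conn A}

lemma cubic_eq_neg_g_Kdiff (hLC : IsLeviCivita gm h) (X Y Z : VF A) :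
    cubic gm C X Y Z = -gm.g (Kdiff C h X Y) Z - gm.g Y (Kdiff C h X Z) := by
  rw [cubic, hLC.2 X Y Z, Kdiff, Kdiff, g_sub_left, g_sub_right]
  ring

variable (hstat : IsStatistical gm C) (hLC : IsLeviCivita gm h)
include hstat hLC

lemma g_Kdiff_swap (X Y Z : VF A) :
    gm.g (Kdiff C h X Z) Y = gm.g (Kdiff C h Y Z) X := by
  linear_combination cubic_eq_neg_g_Kdiff hLC X Y Z - cubic_eq_neg_g_Kdiff hLC Y X Z
    - hstat.2.1 X Y Z - congrArg (gm.g · Z) (Kdiff_comm hstat.1 hLC.1 X Y)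
    - gm.symm Y (Kdiff C h X Z) + gm.symm X (Kdiff C h Y Z)

lemma g_Kdiff_comm_right (X Y Z : VF A) :
    gm.g (Kdiff C h X Y) Z = gm.g (Kdiff C h X Z) Y := by
  rw [g_Kdiff_swap hstat hLC X Z Y, Kdiff_comm hstat.1 hLC.1 Z Y,
    ← g_Kdiff_swap hstat hLC X Y Z]

lemma cubic_eq_neg_two_g_Kdiff (X Y Z : VF A) :
    cubic gm C X Y Z = -2 * gm.g (Kdiff C h X Y) Z := by
  rw [cubic_eq_neg_g_Kdiff hLC, gm.symm Y, g_Kdiff_comm_right hstat hLC X Z Y]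
  ring

lemma cubic_Kdiff_left (X Y Z W : VF A) :
    cubic gm C (Kdiff C h X Y) Z W = -2 * gm.g (Kdiff C h X Y) (Kdiff C h Z W) := by
  rw [cubic_eq_neg_two_g_Kdiff hstat hLC, Kdiff_comm hstat.1 hLC.1,
    g_Kdiff_comm_right hstat hLC, gm.symm]

lemma Kdiff_dual (hdual : IsDual gm C Cs) (X Y : VF A) :
    Kdiff Cs h X Y = -Kdiff C h X Y := by
  refine eq_neg_of_add_eq_zero_left (gm.nondeg _ fun W => ?_)
  have hCs : gm.g (Kdiff Cs h X Y) W = gm.g (Cs.D X Y) W - gm.g (h.D X Y) W := by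
    rw [Kdiff, g_sub_left]
  have hC : gm.g (Kdiff C h X W) Y = gm.g (C.D X W) Y - gm.g (h.D X W) Y := by
    rw [Kdiff, g_sub_left]
  rw [gm.add_left]
  linear_combination hCs + hC + g_Kdiff_comm_right hstat hLC X Y W - hdual X W Y + hLC.2 X W Y
    - gm.symm W (Cs.D X Y) + gm.symm W (h.D X Y)

lemma curv_sub_curv_dual (hdual : IsDual gm C Cs) (X Y Z : VF A) :
    curv C X Y Z - curv Cs X Y Z
      = (2 : ℝ) • (covK h (Kdiff C h) X Y Z - covK h (Kdiff C h) Y X Z) := by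
  have hK : Kdiff Cs h = fun X Y => -Kdiff C h X Y :=
    funext fun X => funext fun Y => Kdiff_dual hstat hLC hdual X Y
  rw [curv_eq_curv_add_covK hLC.1, curv_eq_curv_add_covK (D := Cs) hLC.1, hK]
  simp only [covK, D_neg_right, Kdiff_neg_right, neg_neg]
  module

lemma curv_eq_curv_dual_iff_covK_comm (hdual : IsDual gm C Cs) :
    (∀ X Y Z, curv C X Y Z = curv Cs X Y Z) ↔
      ∀ X Y Z, covK h (Kdiff C h) X Y Z = covK h (Kdiff C h) Y X Z := by
  simp only [← sub_eq_zero (b := curv Cs _ _ _), curv_sub_curv_dual hstat hLC hdual,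
    smul_eq_zero, two_ne_zero, false_or, sub_eq_zero]

lemma covC_levi_cubic (X Y Z W : VF A) :
    covC h (cubic gm C) X Y Z W = -2 * gm.g (covK h (Kdiff C h) X Y Z) W := by
  have hX : ∀ f : A, X (-2 * f) = -2 * X f := fun f => by
    rw [neg_mul, two_mul, map_neg, map_add, neg_mul, two_mul]
  simp only [covC, covK, cubic_eq_neg_two_g_Kdiff hstat hLC, g_sub_left, hX]
  linear_combination -2 * hLC.2 X (Kdiff C h Y Z) W

lemma totSym4_covC_levi_iff :
    TotSym4 (covC h (cubic gm C)) ↔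
      ∀ X Y Z, covK h (Kdiff C h) X Y Z = covK h (Kdiff C h) Y X Z := by
  rw [totSym4_covC_iff hstat.2]
  constructor
  · intro hcomm X Y Z
    refine ext_g gm fun W => eq_of_add_self_eq_add_self ?_
    linear_combination covC_levi_cubic hstat hLC X Y Z W - covC_levi_cubic hstat hLC Y X Z W
      - hcomm X Y Z W
  · intro hcomm X Y Z W
    rw [covC_levi_cubic hstat hLC, covC_levi_cubic hstat hLC, hcomm]

lemma covC_cubic_eq_covC_levi_add (X Y Z W : VF A) :
    covC C (cubic gm C) X Y Z W = covC h (cubic gm C) X Y Z W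
      + 2 * (gm.g (Kdiff C h X Y) (Kdiff C h Z W) + gm.g (Kdiff C h X Z) (Kdiff C h Y W)
        + gm.g (Kdiff C h X W) (Kdiff C h Y Z)) := by
  have h2 := hstat.2.1
  have h3 := hstat.2.2
  simp only [covC, D_eq_add_Kdiff (D := C) (h := h), cubic_add_left, cubic_add_middle,
    cubic_add_right]
  rw [h2 Y (Kdiff C h X Z), h3 Y Z (Kdiff C h X W), h2 Y (Kdiff C h X W)]
  simp only [cubic_Kdiff_left hstat hLC]
  ring

lemma totSym4_covC_iff_totSym4_covC_levi :
    TotSym4 (covC C (cubic gm C)) ↔ TotSym4 (covC h (cubic gm C)) := by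
  have hK := Kdiff_comm hstat.1 hLC.1
  rw [totSym4_covC_iff hstat.2, totSym4_covC_iff hstat.2]
  refine forall₄_congr fun X Y Z W => ?_
  rw [covC_cubic_eq_covC_levi_add hstat hLC, covC_cubic_eq_covC_levi_add hstat hLC, hK Y X,
    gm.symm (Kdiff C h Y Z), gm.symm (Kdiff C h Y W), add_right_comm (gm.g (Kdiff C h X Y) _),
    add_left_inj]

end Statistical

theorem stmt15_general (gm : Metric A) (C Cs h : Conn A)
    (hstat : IsStatistical gm C) (hLC : IsLeviCivita gm h)
    (hdual : IsDual gm C Cs) :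
    ((∀ X Y Z, curv C X Y Z = curv Cs X Y Z) ↔
        TotSym4 (covC C (cubic gm C))) ∧
      (TotSym4 (covC C (cubic gm C)) ↔ TotSym4 (covC h (cubic gm C))) ∧
      (TotSym4 (covC h (cubic gm C)) ↔ TotSym3 (covK h (Kdiff C h))) ∧
      (TotSym3 (covK h (Kdiff C h)) ↔
        (∀ X Y Z W, gm.g (curv C X Y Z) W = - gm.g (curv C X Y W) Z)) := by
  have hR := curv_eq_curv_dual_iff_covK_comm hstat hLC hdual
  have hCh := totSym4_covC_levi_iff hstat hLC
  have hC := totSym4_covC_iff_totSym4_covC_levi hstat hLC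
  have hK := totSym3_covK_iff (D := h) (Kdiff_comm hstat.1 hLC.1)
  exact ⟨hR.trans (hCh.symm.trans hC.symm), hC, hCh.trans hK.symm,
    hK.trans (hR.symm.trans (curv_eq_curv_dual_iff_skew hdual))⟩

/-- equivalence of: conjugate symmetry `R = R*`, total symmetry
of `∇C`, of `∇̂C`, of `∇̂K`, and skew-symmetry of the `(0,4)`-curvature in
the last two slots. -/
theorem stmt15 (gm : Metric A) (C Cs h : Conn A)
    (hstat : IsStatistical gm C) (hLC : IsLeviCivita gm h)
    (hTs : TorsionFree Cs) (hdual : IsDual gm C Cs) :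
    ((∀ X Y Z, curv C X Y Z = curv Cs X Y Z) ↔
        TotSym4 (covC C (cubic gm C))) ∧
      (TotSym4 (covC C (cubic gm C)) ↔ TotSym4 (covC h (cubic gm C))) ∧
      (TotSym4 (covC h (cubic gm C)) ↔ TotSym3 (covK h (Kdiff C h))) ∧
      (TotSym3 (covK h (Kdiff C h)) ↔
        (∀ X Y Z W, gm.g (curv C X Y Z) W = - gm.g (curv C X Y W) Z)) :=
  stmt15_general gm C Cs h hstat hLC hdual

end StatMfd
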